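/- Let a_j = √((j + 1/2)(j + 1)) for j ∈ ℕ and φ(n) = ∑_{j=0}^{n} 1/a_j. There exist constants 0 < c ≤ C such that for all integers n, m ≥ 1: c · |log n - log m| ≤ |φ(n) - φ(m)| ≤ C · |log n - log m|. (Thus the spectral metric of the cyclic pair given by the scaling operator and the Gaussian is equivalent to the metric induced on ℕ* ⊂ ℝ₊* by the invariant metric of the Lie group ℝ₊*.) -/

import Mathlib

/-!
The increments of `φ` are `1/a_{k+1}`, and `k + 3/2 ≤ a_{k+1} ≤ k + 2`, while the increments of
`log` satisfy `1/(k+1) ≤ log (k+1) - log k ≤ 1/k`. So for `k ≥ 1` each increment of `φ` lies between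
`1/3` and `1` times the corresponding increment of `log`, and the comparison of the distances
follows by telescoping.
-/

open Finset

/-- `φ(n) = ∑_{j=0}^{n} 1/a_j` with `a_j = √((j+1/2)(j+1))`. -/
noncomputable def phi (n : ℕ) : ℝ :=
  ∑ j ∈ Finset.range (n + 1), 1 / Real.sqrt (((j : ℝ) + 1 / 2) * ((j : ℝ) + 1))

section Telescoping

variable {u v f g : ℕ → ℝ} {a m n : ℕ}

theorem sub_le_sub_of_forall_succ_sub_le (h : ∀ k ≥ a, u (k + 1) - u k ≤ v (k + 1) - v k)
    (ham : a ≤ m) (hmn : m ≤ n) : u n - u m ≤ v n - v m := by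
  have hmono : MonotoneOn (v - u) (Set.Ici a) :=
    monotoneOn_nat_Ici_of_le_succ fun k hk => by
      simp only [Pi.sub_apply]
      linarith [h k hk]
  have := hmono ham (ham.trans hmn) hmn
  simp only [Pi.sub_apply] at this
  linarith

theorem abs_sub_comparable_of_succ_sub {c C : ℝ} (hc : 0 ≤ c)
    (hg : ∀ k ≥ a, g k ≤ g (k + 1))
    (hlow : ∀ k ≥ a, c * (g (k + 1) - g k) ≤ f (k + 1) - f k)
    (hup : ∀ k ≥ a, f (k + 1) - f k ≤ C * (g (k + 1) - g k)) (hm : a ≤ m) (hn : a ≤ n) :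
    c * |g n - g m| ≤ |f n - f m| ∧ |f n - f m| ≤ C * |g n - g m| := by
  wlog hmn : m ≤ n generalizing m n
  · rw [abs_sub_comm (g n), abs_sub_comm (f n)]
    exact this hn hm (le_of_not_ge hmn)
  have hg_mono : g m ≤ g n := monotoneOn_nat_Ici_of_le_succ hg hm (hm.trans hmn) hmn
  have hf_low : c * g n - c * g m ≤ f n - f m :=
    sub_le_sub_of_forall_succ_sub_le (u := fun k => c * g k)
      (fun k hk => by rw [← mul_sub]; exact hlow k hk) hm hmn
  have hf_up : f n - f m ≤ C * g n - C * g m :=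
    sub_le_sub_of_forall_succ_sub_le (v := fun k => C * g k)
      (fun k hk => by rw [← mul_sub]; exact hup k hk) hm hmn
  have hf_nonneg : 0 ≤ f n - f m := by
    linarith [mul_nonneg hc (sub_nonneg.2 hg_mono)]
  rw [abs_of_nonneg (sub_nonneg.2 hg_mono), abs_of_nonneg hf_nonneg]
  constructor <;> linarith

end Telescoping

theorem phi_succ_sub (n : ℕ) :
    phi (n + 1) - phi n = 1 / Real.sqrt (((n : ℝ) + 3 / 2) * ((n : ℝ) + 2)) := by
  rw [phi, phi, Finset.sum_range_succ _ (n + 1), add_sub_cancel_left]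
  push_cast
  ring_nf

theorem Real.inv_add_one_le_log_add_one_sub_log {x : ℝ} (hx : 0 < x) :
    (x + 1)⁻¹ ≤ Real.log (x + 1) - Real.log x := by
  have h := Real.one_sub_inv_le_log_of_pos (show 0 < (x + 1) / x by positivity)
  rw [Real.log_div (by positivity) hx.ne', inv_div] at h
  calc (x + 1)⁻¹ = 1 - x / (x + 1) := by field_simp; ring
    _ ≤ _ := h

theorem Real.log_add_one_sub_log_le_inv {x : ℝ} (hx : 0 < x) :
    Real.log (x + 1) - Real.log x ≤ x⁻¹ := by
  have h := Real.log_le_sub_one_of_pos (show 0 < (x + 1) / x by positivity)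
  rw [Real.log_div (by positivity) hx.ne'] at h
  calc _ ≤ (x + 1) / x - 1 := h
    _ = x⁻¹ := by field_simp; ring

theorem Real.le_sqrt_mul_of_le {x y : ℝ} (hx : 0 ≤ x) (hxy : x ≤ y) : x ≤ Real.sqrt (x * y) :=
  Real.le_sqrt_of_sq_le (by nlinarith)

theorem Real.sqrt_mul_le_of_le {x y : ℝ} (hx : 0 ≤ x) (hxy : x ≤ y) : Real.sqrt (x * y) ≤ y :=
  Real.sqrt_le_iff.mpr ⟨by linarith, by nlinarith⟩

theorem phi_succ_sub_le_log {k : ℕ} (hk : 1 ≤ k) :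
    phi (k + 1) - phi k ≤ Real.log (k + 1 : ℕ) - Real.log k := by
  have hk0 : (0 : ℝ) < k := by exact_mod_cast hk
  rw [phi_succ_sub, Nat.cast_succ]
  calc 1 / Real.sqrt (((k : ℝ) + 3 / 2) * ((k : ℝ) + 2))
      ≤ 1 / ((k : ℝ) + 1) := by
        gcongr
        linarith [Real.le_sqrt_mul_of_le (x := (k : ℝ) + 3 / 2) (y := k + 2) (by positivity)
          (by linarith)]
    _ ≤ _ := by simpa using Real.inv_add_one_le_log_add_one_sub_log hk0

theorem third_mul_log_le_phi_succ_sub {k : ℕ} (hk : 1 ≤ k) :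
    1 / 3 * (Real.log (k + 1 : ℕ) - Real.log k) ≤ phi (k + 1) - phi k := by
  have hk1 : (1 : ℝ) ≤ k := by exact_mod_cast hk
  rw [phi_succ_sub, Nat.cast_succ]
  calc 1 / 3 * (Real.log ((k : ℝ) + 1) - Real.log k)
      ≤ 1 / 3 * (k : ℝ)⁻¹ := by
        gcongr
        exact Real.log_add_one_sub_log_le_inv (by positivity)
    _ = 1 / (3 * k) := by ring
    _ ≤ 1 / ((k : ℝ) + 2) := by
        gcongr
        linarith
    _ ≤ _ := by
        gcongr
        exact Real.sqrt_mul_le_of_le (by positivity) (by linarith)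

/-- the distance `|φ(n) - φ(m)|` is equivalent to the logarithmic
distance on `ℕ* ⊂ ℝ₊*`. -/
theorem stmt10 :
    ∃ c C : ℝ, 0 < c ∧ c ≤ C ∧
      ∀ n m : ℕ, 1 ≤ n → 1 ≤ m →
        c * |Real.log n - Real.log m| ≤ |phi n - phi m|
        ∧ |phi n - phi m| ≤ C * |Real.log n - Real.log m| := by
  refine ⟨1 / 3, 1, by norm_num, by norm_num, fun n m hn hm => ?_⟩
  have hlog_mono : ∀ k : ℕ, k ≥ 1 → Real.log k ≤ Real.log (k + 1 : ℕ) := fun k hk =>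
    Real.log_le_log (by exact_mod_cast hk) (by exact_mod_cast k.le_succ)
  exact abs_sub_comparable_of_succ_sub (g := fun k : ℕ => Real.log k) (by norm_num) hlog_mono
    (fun k hk => third_mul_log_le_phi_succ_sub hk)
    (fun k hk => by simpa using phi_succ_sub_le_log hk) hm hn
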